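/- Let R be a right p.p.-ring and M a strictly totally ordered monoid (a monoid equipped with a total order such that g < g' implies gh < g'h and hg < hg' for all g, g', h ∈ M). If R is M-central Armendariz, then R is M-Armendariz. -/

import Mathlib

/-!
For a nontrivial `M`, central Armendariz forces idempotents to be central: for an idempotent `e`
and `a = e r (1 - e)`, the product `(e - a k) ((1 - e) + a k) = 0` in `R[M]` (with `k ≠ 1`) makes
`a = e a` central, whence `a = a e = 0`. A right p.p.-ring whose idempotents are central is reduced.
Over a reduced ring with `α * β = 0` and all products `α g * β h` central, these products vanish
by induction on `(g, h)` in lexicographic order: multiplying the coefficient of `g * h` in `α * β`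
on the left by `α g` kills every term except `α g * (α g * β h)`, so the central element
`α g * β h` squares to zero. For a trivial monoid `R[M] ≅ R` and there is nothing to prove.
-/

section

open MonoidAlgebra

variable {M R : Type*}

def IsArmendariz (M R : Type*) [Monoid M] [Semiring R] : Prop :=
  ∀ α β : MonoidAlgebra R M, α * β = 0 →
    ∀ g ∈ α.coeff.support, ∀ h ∈ β.coeff.support, α.coeff g * β.coeff h = 0

def IsCentralArmendariz (M R : Type*) [Monoid M] [Semiring R] : Prop :=
  ∀ α β : MonoidAlgebra R M, α * β = 0 →
    ∀ g ∈ α.coeff.support, ∀ h ∈ β.coeff.support, α.coeff g * β.coeff h ∈ Set.center R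

def IsRightPPRing (R : Type*) [Semiring R] : Prop :=
  ∀ a : R, ∃ e : R, IsIdempotentElem e ∧ ∀ x : R, a * x = 0 ↔ ∃ r : R, x = e * r

theorem forall_of_forall_lt_of_finite [LinearOrder M] {P : M → Prop}
    (hfin : {x | ¬P x}.Finite) (ih : ∀ x, (∀ y < x, P y) → P x) (x : M) : P x := by
  by_contra hx
  obtain ⟨m, hm, hmin⟩ := hfin.exists_minimal ⟨x, hx⟩
  exact hm <| ih m fun y hy => by_contra fun hPy => hy.not_ge (hmin hPy hy.le)

theorem IsReduced.mul_eq_zero_symm [Semiring R] [IsReduced R] {a b : R} (h : a * b = 0) :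
    b * a = 0 :=
  eq_zero_of_pow_eq_zero (n := 2) <| by rw [sq, mul_assoc, ← mul_assoc a, h, zero_mul, mul_zero]

theorem isReduced_of_isRightPPRing [Semiring R] (hpp : IsRightPPRing R)
    (hcen : ∀ e : R, IsIdempotentElem e → e ∈ Set.center R) : IsReduced R := by
  refine (isReduced_iff_pow_one_lt 2 one_lt_two).2 fun x hx => ?_
  rw [sq] at hx
  obtain ⟨e, he, hann⟩ := hpp x
  obtain ⟨r, rfl⟩ := (hann _).1 hx
  have hxe : e * r * e = 0 := (hann e).2 ⟨e, he.eq.symm⟩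
  rw [← he.eq, mul_assoc, ← Semigroup.mem_center_iff.1 (hcen e he) (e * r), hxe]

namespace MonoidAlgebra

theorem mul_coeff_mul_mul_eq_of_forall_ne [Semiring R] [Mul M] {x y : MonoidAlgebra R M}
    {c : R} {a b : M}
    (h : ∀ a' b', a' * b' = a * b → (a', b') ≠ (a, b) → c * (x.coeff a' * y.coeff b') = 0) :
    c * (x * y).coeff (a * b) = c * (x.coeff a * y.coeff b) := by
  classical
  simp_rw [coeff_mul, Finsupp.sum, ← Finset.sum_product', Finset.mul_sum]
  refine (Finset.sum_eq_single (a, b) (fun p _ hp => ?_) fun hab => ?_).trans (by rw [if_pos rfl])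
  · split_ifs with hpab
    exacts [h p.1 p.2 hpab hp, mul_zero c]
  · rw [Finset.mem_product, not_and_or, Finsupp.notMem_support_iff,
      Finsupp.notMem_support_iff] at hab
    rcases hab with h0 | h0 <;> simp [h0]

end MonoidAlgebra

namespace IsCentralArmendariz

variable [Monoid M]

theorem coeff_mul_coeff_mem_center [Semiring R] (hCA : IsCentralArmendariz M R)
    {α β : MonoidAlgebra R M} (hαβ : α * β = 0) (g h : M) :
    α.coeff g * β.coeff h ∈ Set.center R := by
  by_cases hg : g ∈ α.coeff.support
  · by_cases hh : h ∈ β.coeff.support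
    · exact hCA α β hαβ g hg h hh
    · rw [Finsupp.notMem_support_iff.1 hh, mul_zero]; exact Set.zero_mem_center
  · rw [Finsupp.notMem_support_iff.1 hg, zero_mul]; exact Set.zero_mem_center

theorem mul_mul_one_sub_eq_zero [Nontrivial M] [Ring R] (hCA : IsCentralArmendariz M R) {e : R}
    (he : IsIdempotentElem e) (r : R) : e * r * (1 - e) = 0 := by
  obtain ⟨k, hk⟩ := exists_ne (1 : M)
  set a := e * r * (1 - e)
  have hea : e * a = a := by simp only [a, ← mul_assoc, he.eq]
  have hae : a * e = 0 := by simp only [a, mul_assoc, he.one_sub_mul_self, mul_zero]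
  have haf : a * (1 - e) = a := by simp only [a, mul_assoc, he.one_sub.eq]
  have haa : a * a = 0 := by
    rw [show a * a = a * e * (r * (1 - e)) by simp only [a, mul_assoc], hae, zero_mul]
  let α : MonoidAlgebra R M := single 1 e - single k a
  let β : MonoidAlgebra R M := single 1 (1 - e) + single k a
  have hαβ : α * β = 0 := by
    simp only [α, β, sub_mul, mul_add, single_mul_single, one_mul, mul_one, hea, haf, haa,
      he.mul_one_sub_self, single_zero]
    abel
  have hα : α.coeff 1 = e := by simp [α, hk.symm]
  have hβ : β.coeff k = a := by simp [β, hk]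
  have hcen := hCA.coeff_mul_coeff_mem_center hαβ 1 k
  rw [hα, hβ, hea] at hcen
  rw [← hea, Semigroup.mem_center_iff.1 hcen, hae]

theorem isIdempotentElem_mem_center [Nontrivial M] [Ring R] (hCA : IsCentralArmendariz M R)
    {e : R} (he : IsIdempotentElem e) : e ∈ Set.center R := by
  refine Semigroup.mem_center_iff.2 fun r => ?_
  have h₁ := hCA.mul_mul_one_sub_eq_zero he r
  have h₂ := hCA.mul_mul_one_sub_eq_zero he.one_sub r
  rw [sub_sub_cancel] at h₂
  rw [mul_sub, mul_one, sub_eq_zero] at h₁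
  rw [sub_mul, one_mul, sub_mul, sub_eq_zero] at h₂
  rw [h₁, ← h₂]

end IsCentralArmendariz

section Ordered

variable [Monoid M] [LinearOrder M] [MulLeftStrictMono M] [MulRightStrictMono M] [Semiring R]
  [IsReduced R] {α β : MonoidAlgebra R M}

theorem coeff_mul_coeff_eq_zero_of_forall_lt (hαβ : α * β = 0)
    (hcen : ∀ g h, α.coeff g * β.coeff h ∈ Set.center R) {g h : M}
    (ih₁ : ∀ g' < g, ∀ h', α.coeff g' * β.coeff h' = 0)
    (ih₂ : ∀ h' < h, α.coeff g * β.coeff h' = 0) :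
    α.coeff g * β.coeff h = 0 := by
  have := mulLeftMono_of_mulLeftStrictMono M
  have := MulLeftStrictMono.toIsLeftCancelMul (α := M)
  have hsq : α.coeff g * (α.coeff g * β.coeff h) = 0 := by
    rw [← mul_coeff_mul_mul_eq_of_forall_ne, hαβ, coeff_zero, Finsupp.zero_apply, mul_zero]
    intro g' h' heq hne
    rcases lt_trichotomy g' g with hlt | rfl | hgt
    · rw [ih₁ g' hlt h', mul_zero]
    · exact absurd (by rw [mul_left_cancel heq]) hne
    · -- `g < g'` forces `h' < h`, and then `α g` kills `β h'` from both sides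
      have hh : h' < h := lt_of_not_ge fun hle => (mul_lt_mul_of_lt_of_le hgt hle).ne' heq
      rw [Semigroup.mem_center_iff.1 (hcen g' h'), mul_assoc,
        IsReduced.mul_eq_zero_symm (ih₂ h' hh), mul_zero]
  refine eq_zero_of_pow_eq_zero (n := 2) ?_
  rw [sq, mul_assoc, Semigroup.mem_center_iff.1 (hcen g h), ← mul_assoc, hsq, zero_mul]

theorem coeff_mul_coeff_eq_zero_of_isReduced (hαβ : α * β = 0)
    (hcen : ∀ g h, α.coeff g * β.coeff h ∈ Set.center R) (g h : M) :
    α.coeff g * β.coeff h = 0 := by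
  revert h
  refine forall_of_forall_lt_of_finite (P := fun g => ∀ h, α.coeff g * β.coeff h = 0) ?_
    (fun g ih₁ => forall_of_forall_lt_of_finite ?_ fun h ih₂ => ?_) g
  · exact α.coeff.support.finite_toSet.subset fun g hg =>
      Finsupp.mem_support_iff.2 fun h0 => hg fun h => by rw [h0, zero_mul]
  · exact β.coeff.support.finite_toSet.subset fun h hh =>
      Finsupp.mem_support_iff.2 fun h0 => hh (by rw [h0, mul_zero])
  · exact coeff_mul_coeff_eq_zero_of_forall_lt hαβ hcen ih₁ ih₂

theorem IsCentralArmendariz.isArmendariz_of_isReduced (hCA : IsCentralArmendariz M R) :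
    IsArmendariz M R :=
  fun _ _ hαβ g _ h _ =>
    coeff_mul_coeff_eq_zero_of_isReduced hαβ (hCA.coeff_mul_coeff_mem_center hαβ) g h

end Ordered

theorem isArmendariz_of_subsingleton [Monoid M] [Subsingleton M] [Semiring R] :
    IsArmendariz M R := by
  intro α β hαβ g _ h _
  rw [← coeff_mul_mul_of_uniqueMul fun _ _ _ _ _ => ⟨Subsingleton.elim .., Subsingleton.elim ..⟩,
    hαβ, coeff_zero, Finsupp.zero_apply]

end

/-- If `R` is a right p.p.-ring and `M` a strictly totally ordered monoid, then
`R` `M`-central Armendariz implies `R` `M`-Armendariz. -/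
theorem stmt_6 (M R : Type*) [Monoid M] [LinearOrder M] [Ring R]
    (hstrict₁ : ∀ g g' h : M, g < g' → g * h < g' * h)
    (hstrict₂ : ∀ g g' h : M, g < g' → h * g < h * g')
    (hpp : ∀ a : R, ∃ e : R, IsIdempotentElem e ∧
      ∀ x : R, a * x = 0 ↔ ∃ r : R, x = e * r)
    (hCA : ∀ α β : MonoidAlgebra R M, α * β = 0 →
      ∀ g ∈ α.coeff.support, ∀ h ∈ β.coeff.support, α.coeff g * β.coeff h ∈ Set.center R) :
    ∀ α β : MonoidAlgebra R M, α * β = 0 →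
      ∀ g ∈ α.coeff.support, ∀ h ∈ β.coeff.support, α.coeff g * β.coeff h = 0 := by
  have : MulLeftStrictMono M := ⟨fun h _ _ => hstrict₂ _ _ h⟩
  have : MulRightStrictMono M := ⟨fun h _ _ => hstrict₁ _ _ h⟩
  rcases subsingleton_or_nontrivial M with _ | _
  · exact isArmendariz_of_subsingleton
  · have : IsReduced R := isReduced_of_isRightPPRing hpp fun _ =>
      IsCentralArmendariz.isIdempotentElem_mem_center hCA
    exact IsCentralArmendariz.isArmendariz_of_isReduced hCA
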